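/- Let d, N, M be integers with d ≥ 2, M ≥ 2 and N(M−1) = d²−1, and let {G_{α,k} : α = 1,…,N; k = 1,…,M−1} be traceless Hermitian d×d complex matrices that are orthonormal for the Hilbert–Schmidt inner product, i.e. tr(G_{α,k} G_{β,l}) = δ_{αβ} δ_{kl}. For each α set G_α = Σ_{k=1}^{M−1} G_{α,k}, define H_{α,k} = G_α − √M(√M+1) G_{α,k} for k = 1,…,M−1 and H_{α,M} = (√M+1) G_α, and for a real number t define E_{α,k} = (1/M) I_d + t H_{α,k}. Then for all α, Σ_{k=1}^M E_{α,k} = I_d and tr(E_{α,k}) = d/M; moreover, with x = d/M² + t²(M−1)(√M+1)², one has tr(E_{α,k}²) = x for all α,k, tr(E_{α,k} E_{α,l}) = (d − M x)/(M(M−1)) for k ≠ l, and tr(E_{α,k} E_{β,l}) = d/M² for α ≠ β. In particular, if in addition every E_{α,k} is positive semidefinite, then {E_{α,k}} is an (N,M) POVM on C^d with parameter x. -/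

import Mathlib

open Matrix
open scoped BigOperators ComplexOrder Kronecker

noncomputable section


/-- An `(N,M)` POVM on `ℂ^d` with parameter `x` (as in CONTEXT 12, without the
range condition on `x`). -/
def IsNMPOVM (d N M : ℕ) (x : ℝ)
    (E : Fin N → Fin M → Matrix (Fin d) (Fin d) ℂ) : Prop :=
  (∀ α k, (E α k).PosSemidef) ∧
  (∀ α, ∑ k, E α k = 1) ∧
  (∀ α k, (E α k).trace = (d : ℂ) / (M : ℂ)) ∧
  (∀ α k, (E α k * E α k).trace = (x : ℂ)) ∧
  (∀ α k l, k ≠ l →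
    (E α k * E α l).trace = ((((d : ℝ) - M * x) / (M * ((M : ℝ) - 1)) : ℝ) : ℂ)) ∧
  (∀ α β k l, α ≠ β → (E α k * E β l).trace = (d : ℂ) / ((M : ℂ) ^ 2))

/-- `G_α = Σ_{k=1}^{M−1} G_{α,k}`. -/
def Gsum {d N M : ℕ} (G : Fin N → Fin (M - 1) → Matrix (Fin d) (Fin d) ℂ)
    (α : Fin N) : Matrix (Fin d) (Fin d) ℂ :=
  ∑ k, G α k

/-- `H_{α,k} = G_α − √M(√M+1) G_{α,k}` for `k = 1,…,M−1` and
`H_{α,M} = (√M+1) G_α`. -/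
def Hop {d N M : ℕ} (G : Fin N → Fin (M - 1) → Matrix (Fin d) (Fin d) ℂ)
    (α : Fin N) (k : Fin M) : Matrix (Fin d) (Fin d) ℂ :=
  if h : (k : ℕ) < M - 1 then
    Gsum G α - ((Real.sqrt M * (Real.sqrt M + 1) : ℝ) : ℂ) • G α ⟨(k : ℕ), h⟩
  else
    (((Real.sqrt M + 1 : ℝ)) : ℂ) • Gsum G α

/-- `E_{α,k} = (1/M) I_d + t H_{α,k}`. -/
def Eop {d N M : ℕ} (G : Fin N → Fin (M - 1) → Matrix (Fin d) (Fin d) ℂ)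
    (t : ℝ) (α : Fin N) (k : Fin M) : Matrix (Fin d) (Fin d) ℂ :=
  ((M : ℂ))⁻¹ • (1 : Matrix (Fin d) (Fin d) ℂ) + (t : ℂ) • Hop G α k

/-! Every `H_{α,k}` is traceless and
`∑ₖ H_{α,k} = ((M - 1) - √M(√M+1) + (√M+1)) G_α = 0`, which gives the normalisation and trace
conditions. Since `tr(E E') = d/M² + t² tr(H H')`, the rest is the Gram matrix of the `H`'s: by
orthonormality `tr(H_{α,k} H_{β,l})` vanishes for `α ≠ β`, and for `α = β` it is the Gram matrix
of the coefficient vectors `𝟙 - √M(√M+1) eₖ` (`k < M - 1`) and `(√M+1) 𝟙` in `ℝ^{M-1}`, which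
by `(√M)² = M` equals `(√M+1)² (M δₖₗ - 1)`. -/

section Construction

variable {d N M : ℕ} (G : Fin N → Fin (M - 1) → Matrix (Fin d) (Fin d) ℂ)

lemma ofReal_sqrt_natCast_sq (M : ℕ) : ((Real.sqrt M : ℝ) : ℂ) ^ 2 = M := by
  rw [← Complex.ofReal_pow, Real.sq_sqrt (Nat.cast_nonneg M), Complex.ofReal_natCast]

lemma Hop_of_val_eq {α : Fin N} {k : Fin M} {j : Fin (M - 1)} (h : (k : ℕ) = j) :
    Hop G α k = Gsum G α - ((Real.sqrt M * (Real.sqrt M + 1) : ℝ) : ℂ) • G α j := by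
  rw [Hop, dif_pos (h ▸ j.isLt)]
  congr 3
  exact Fin.ext h

lemma Hop_of_not_lt {α : Fin N} {k : Fin M} (hk : ¬ (k : ℕ) < M - 1) :
    Hop G α k = ((Real.sqrt M + 1 : ℝ) : ℂ) • Gsum G α :=
  dif_neg hk

lemma trace_Gsum (htr : ∀ α k, (G α k).trace = 0) (α : Fin N) :
    (Gsum G α).trace = 0 := by
  simp [Gsum, trace_sum, htr]

lemma trace_Hop (htr : ∀ α k, (G α k).trace = 0) (α : Fin N) (k : Fin M) :
    (Hop G α k).trace = 0 := by
  unfold Hop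
  split <;> simp [trace_Gsum G htr, htr]

lemma sum_Hop (hM : 0 < M) (α : Fin N) : ∑ k, Hop G α k = 0 := by
  have hM1 : M - 1 + 1 = M := Nat.sub_add_cancel hM
  rw [← Fin.sum_congr' (fun k ↦ Hop G α k) hM1, Fin.sum_univ_castSucc,
    Hop_of_not_lt G (k := Fin.cast hM1 (Fin.last _)) (by simp),
    Finset.sum_congr rfl fun j _ ↦ Hop_of_val_eq G (k := Fin.cast hM1 j.castSucc) rfl,
    Finset.sum_sub_distrib, ← Finset.smul_sum, Finset.sum_const, Finset.card_univ,
    Fintype.card_fin, ← Nat.cast_smul_eq_nsmul ℂ, ← Gsum, ← sub_smul, ← add_smul]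
  have hcoeff : ((M - 1 : ℕ) : ℂ) - ((Real.sqrt M * (Real.sqrt M + 1) : ℝ) : ℂ)
      + ((Real.sqrt M + 1 : ℝ) : ℂ) = 0 := by
    push_cast [Nat.cast_pred hM]
    linear_combination -ofReal_sqrt_natCast_sq M
  rw [hcoeff, zero_smul]

end Construction

section Products

variable {d N M : ℕ} (G : Fin N → Fin (M - 1) → Matrix (Fin d) (Fin d) ℂ)
  (horth : ∀ α k β l, (G α k * G β l).trace = if α = β ∧ k = l then 1 else 0)
include horth

lemma trace_Gsum_mul (α β : Fin N) (l : Fin (M - 1)) :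
    (Gsum G α * G β l).trace = if α = β then 1 else 0 := by
  simp only [Gsum, Finset.sum_mul, trace_sum, horth]
  split_ifs with h <;> simp [h]

lemma trace_mul_Gsum (α β : Fin N) (k : Fin (M - 1)) :
    (G α k * Gsum G β).trace = if α = β then 1 else 0 := by
  simp only [Gsum, Finset.mul_sum, trace_sum, horth]
  split_ifs with h <;> simp [h]

lemma trace_Gsum_mul_Gsum (α β : Fin N) :
    (Gsum G α * Gsum G β).trace = if α = β then ((M - 1 : ℕ) : ℂ) else 0 := by
  rw [Gsum, Finset.sum_mul, trace_sum]
  simp only [trace_mul_Gsum G horth]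
  split_ifs <;> simp

lemma trace_Hop_mul_Hop_of_ne {α β : Fin N} (hαβ : α ≠ β) (k l : Fin M) :
    (Hop G α k * Hop G β l).trace = 0 := by
  unfold Hop
  split_ifs <;> simp [sub_mul, mul_sub, trace_Gsum_mul_Gsum G horth, trace_Gsum_mul G horth,
    trace_mul_Gsum G horth, horth, hαβ]

lemma trace_Hop_mul_Hop_self (hM : 0 < M) (α : Fin N) (k l : Fin M) :
    (Hop G α k * Hop G α l).trace =
      if k = l then ((M : ℂ) - 1) * ((Real.sqrt M + 1 : ℝ) : ℂ) ^ 2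
      else -((Real.sqrt M + 1 : ℝ) : ℂ) ^ 2 := by
  have hs := ofReal_sqrt_natCast_sq M
  have hM1 : ((M - 1 : ℕ) : ℂ) = M - 1 := Nat.cast_pred hM
  rcases lt_or_ge (k : ℕ) (M - 1) with hk | hk <;> rcases lt_or_ge (l : ℕ) (M - 1) with hl | hl
  · rw [Hop_of_val_eq G (j := ⟨k, hk⟩) rfl, Hop_of_val_eq G (j := ⟨l, hl⟩) rfl]
    simp only [sub_mul, mul_sub, smul_mul_assoc, mul_smul_comm, trace_sub, trace_smul,
      smul_eq_mul, trace_Gsum_mul_Gsum G horth, trace_Gsum_mul G horth,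
      trace_mul_Gsum G horth, horth, if_true, true_and, Fin.mk.injEq, ← Fin.ext_iff, hM1]
    split_ifs
    · push_cast
      linear_combination ((((Real.sqrt M : ℝ) : ℂ) + 1) ^ 2 - 1) * hs
    · push_cast
      linear_combination -hs
  · rw [Hop_of_val_eq G (j := ⟨k, hk⟩) rfl, Hop_of_not_lt G hl.not_gt,
      if_neg (Fin.ne_of_val_ne (by omega))]
    simp only [sub_mul, smul_mul_assoc, mul_smul_comm, trace_sub, trace_smul, smul_eq_mul,
      trace_Gsum_mul_Gsum G horth, trace_mul_Gsum G horth, if_true, hM1]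
    push_cast
    linear_combination (-((Real.sqrt M : ℂ) + 1)) * hs
  · rw [Hop_of_not_lt G hk.not_gt, Hop_of_val_eq G (j := ⟨l, hl⟩) rfl,
      if_neg (Fin.ne_of_val_ne (by omega))]
    simp only [mul_sub, smul_mul_assoc, mul_smul_comm, trace_sub, trace_smul, smul_eq_mul,
      trace_Gsum_mul_Gsum G horth, trace_Gsum_mul G horth, if_true, hM1]
    push_cast
    linear_combination (-((Real.sqrt M : ℂ) + 1)) * hs
  · obtain rfl : k = l := Fin.ext (by omega)
    rw [Hop_of_not_lt G hk.not_gt, if_pos rfl]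
    simp only [smul_mul_assoc, mul_smul_comm, trace_smul, smul_eq_mul,
      trace_Gsum_mul_Gsum G horth, if_true, hM1]
    ring

end Products

section Eop

variable {d N M : ℕ} (G : Fin N → Fin (M - 1) → Matrix (Fin d) (Fin d) ℂ) (t : ℝ)

lemma sum_Eop (hM : 0 < M) (α : Fin N) : ∑ k, Eop G t α k = 1 := by
  have hM0 : (M : ℂ) ≠ 0 := Nat.cast_ne_zero.mpr (by omega)
  simp only [Eop, Finset.sum_add_distrib, ← Finset.smul_sum, sum_Hop G hM, smul_zero, add_zero,
    Finset.sum_const, Finset.card_univ, Fintype.card_fin]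
  rw [smul_comm, ← Nat.cast_smul_eq_nsmul ℂ, smul_smul, mul_inv_cancel₀ hM0, one_smul]

variable (htr : ∀ α k, (G α k).trace = 0)
include htr

lemma trace_Eop (α : Fin N) (k : Fin M) : (Eop G t α k).trace = d / M := by
  simp [Eop, trace_Hop G htr, div_eq_mul_inv, mul_comm]

lemma trace_Eop_mul_Eop (α β : Fin N) (k l : Fin M) :
    (Eop G t α k * Eop G t β l).trace = d / M ^ 2 + t ^ 2 * (Hop G α k * Hop G β l).trace := by
  simp only [Eop, add_mul, mul_add, smul_mul_assoc, mul_smul_comm, trace_add,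
    trace_smul, Matrix.one_mul, Matrix.mul_one, trace_one, trace_Hop G htr, smul_eq_mul,
    Fintype.card_fin]
  ring

end Eop

theorem Eop_isNMPOVM_general
    {d N M : ℕ} (hM : 2 ≤ M)
    (G : Fin N → Fin (M - 1) → Matrix (Fin d) (Fin d) ℂ)
    (htraceless : ∀ α k, (G α k).trace = 0)
    (horth : ∀ α k β l,
      (G α k * G β l).trace = if α = β ∧ k = l then 1 else 0)
    (t : ℝ) :
    (∀ α, ∑ k, Eop G t α k = 1) ∧
    (∀ α k, (Eop G t α k).trace = (d : ℂ) / (M : ℂ)) ∧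
    (∀ α k, (Eop G t α k * Eop G t α k).trace =
      (((d : ℝ) / (M : ℝ) ^ 2 +
        t ^ 2 * ((M : ℝ) - 1) * (Real.sqrt M + 1) ^ 2 : ℝ) : ℂ)) ∧
    (∀ α k l, k ≠ l → (Eop G t α k * Eop G t α l).trace =
      ((((d : ℝ) - M * ((d : ℝ) / (M : ℝ) ^ 2 +
          t ^ 2 * ((M : ℝ) - 1) * (Real.sqrt M + 1) ^ 2)) /
        (M * ((M : ℝ) - 1)) : ℝ) : ℂ)) ∧
    (∀ α β k l, α ≠ β → (Eop G t α k * Eop G t β l).trace =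
      (d : ℂ) / ((M : ℂ) ^ 2)) ∧
    ((∀ α k, (Eop G t α k).PosSemidef) →
      IsNMPOVM d N M
        ((d : ℝ) / (M : ℝ) ^ 2 + t ^ 2 * ((M : ℝ) - 1) * (Real.sqrt M + 1) ^ 2)
        (Eop G t)) := by
  have hM0 : (M : ℂ) ≠ 0 := Nat.cast_ne_zero.mpr (by omega)
  have hM1 : (M : ℂ) - 1 ≠ 0 := sub_ne_zero.mpr (Nat.cast_ne_one.mpr (by omega))
  have hsum := sum_Eop G t (by omega : 0 < M)
  have htrace := trace_Eop G t htraceless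
  refine ⟨hsum, htrace, ?sq, ?offDiag, ?cross,
    fun hpos ↦ ⟨hpos, hsum, htrace, ?sq, ?offDiag, ?cross⟩⟩
  case sq =>
    intro α k
    rw [trace_Eop_mul_Eop G t htraceless, trace_Hop_mul_Hop_self G horth (by omega), if_pos rfl]
    push_cast
    ring
  case offDiag =>
    intro α k l hkl
    rw [trace_Eop_mul_Eop G t htraceless, trace_Hop_mul_Hop_self G horth (by omega), if_neg hkl]
    push_cast
    field_simp
    ring
  case cross =>
    intro α β k l hαβ
    rw [trace_Eop_mul_Eop G t htraceless, trace_Hop_mul_Hop_of_ne G horth hαβ, mul_zero, add_zero]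

/-- Construction of informationally complete `(N,M)` POVMs from a traceless
Hermitian orthonormal basis. -/
theorem Eop_isNMPOVM
    {d N M : ℕ} (hd : 2 ≤ d) (hM : 2 ≤ M) (hNM : N * (M - 1) = d ^ 2 - 1)
    (G : Fin N → Fin (M - 1) → Matrix (Fin d) (Fin d) ℂ)
    (hherm : ∀ α k, (G α k).IsHermitian)
    (htraceless : ∀ α k, (G α k).trace = 0)
    (horth : ∀ α k β l,
      (G α k * G β l).trace = if α = β ∧ k = l then 1 else 0)
    (t : ℝ) :
    (∀ α, ∑ k, Eop G t α k = 1) ∧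
    (∀ α k, (Eop G t α k).trace = (d : ℂ) / (M : ℂ)) ∧
    (∀ α k, (Eop G t α k * Eop G t α k).trace =
      (((d : ℝ) / (M : ℝ) ^ 2 +
        t ^ 2 * ((M : ℝ) - 1) * (Real.sqrt M + 1) ^ 2 : ℝ) : ℂ)) ∧
    (∀ α k l, k ≠ l → (Eop G t α k * Eop G t α l).trace =
      ((((d : ℝ) - M * ((d : ℝ) / (M : ℝ) ^ 2 +
          t ^ 2 * ((M : ℝ) - 1) * (Real.sqrt M + 1) ^ 2)) /
        (M * ((M : ℝ) - 1)) : ℝ) : ℂ)) ∧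
    (∀ α β k l, α ≠ β → (Eop G t α k * Eop G t β l).trace =
      (d : ℂ) / ((M : ℂ) ^ 2)) ∧
    ((∀ α k, (Eop G t α k).PosSemidef) →
      IsNMPOVM d N M
        ((d : ℝ) / (M : ℝ) ^ 2 + t ^ 2 * ((M : ℝ) - 1) * (Real.sqrt M + 1) ^ 2)
        (Eop G t)) :=
  Eop_isNMPOVM_general hM G htraceless horth t
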